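/- Let K ∈ L²(ℝ^d × ℝ^d) and define the operator L_K on L²(ℝ^d) by (F(L_K f))(λ) = ∫ K(λ, λ₁)(F f)(λ₁) dλ₁. Let b̲, b̲' ∈ ℝ^d determine anisotropic Sobolev norms ‖f‖_{H^{b̲}}² = ∫ ⟨λ⟩_{b̲}² |F f(λ)|² dλ with ⟨λ⟩_{b̲} = (∑_i |λ_i|^{2b_i})^{1/2}. Then ‖L_K‖_{H^{b̲} → H^{b̲'}} ≤ P^{1/4}, where P := ∫∫ ⟨λ₁⟩_{b̲}^{-2} ⟨λ₁'⟩_{b̲}^{-2} |∫ ⟨λ⟩_{b̲'}² K(λ,λ₁) conj(K(λ,λ₁')) dλ|² dλ₁ dλ₁'. -/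

import Mathlib

open MeasureTheory Real ENNReal

/-- Anisotropic Japanese bracket `⟨λ⟩_{b̲} = (∑_i |λ_i|^{2 b_i})^{1/2}` on `ℝ^d`. -/
noncomputable def jbv {d : ℕ} (b : Fin d → ℝ) (l : Fin d → ℝ) : ℝ :=
  Real.sqrt (∑ i, |l i| ^ (2 * b i))

/-!
Expanding the square and applying Fubini, `∫ w |∫ K g|²` (with `w = ⟨·⟩²_{b̲'}`) is the real
part of `∫∫ g(λ₁) conj g(λ₁') M(λ₁, λ₁') dλ₁ dλ₁'`, where
`M(λ₁, λ₁') = ∫ w(λ) K(λ, λ₁) conj K(λ, λ₁') dλ` is the kernel of `L_K^* w L_K`.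
Writing `|g(λ₁) g(λ₁') M| = (v₁ v₁' |g(λ₁) g(λ₁')|) · (v₁⁻¹ v₁'⁻¹ |M|)` with `v = ⟨·⟩_{b̲}`,
Cauchy–Schwarz on the product space bounds this by `√P · ‖v g‖₂²`.
-/

open ComplexConjugate

lemma measurable_jbv {d : ℕ} (b : Fin d → ℝ) : Measurable (jbv b) := by
  unfold jbv; fun_prop

lemma jbv_ne_zero {d : ℕ} (b : Fin d → ℝ) {l : Fin d → ℝ} (hl : l ≠ 0) : jbv b l ≠ 0 := by
  obtain ⟨i, hi⟩ := Function.ne_iff.mp hl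
  have hterm : 0 < |l i| ^ (2 * b i) := Real.rpow_pos_of_pos (abs_pos.mpr hi) _
  refine (Real.sqrt_pos.mpr (hterm.trans_le ?_)).ne'
  exact Finset.single_le_sum (f := fun j => |l j| ^ (2 * b j))
    (fun j _ => Real.rpow_nonneg (abs_nonneg (l j)) _) (Finset.mem_univ i)

lemma ae_jbv_ne_zero {d : ℕ} [NeZero d] (b : Fin d → ℝ) : ∀ᵐ l : Fin d → ℝ, jbv b l ≠ 0 := by
  filter_upwards [volume.ae_ne 0] with l hl using jbv_ne_zero b hl

section

variable {α β : Type*} [MeasurableSpace α] [MeasurableSpace β] {μ : Measure α} {ν : Measure β}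

lemma measurable_mul_conj_of_uncurry {F : α → β → ℂ} (hF : Measurable (Function.uncurry F)) :
    Measurable fun q : α × β × β => F q.1 q.2.1 * conj (F q.1 q.2.2) :=
  (hF.comp (measurable_fst.prodMk (measurable_fst.comp measurable_snd))).mul
    (Complex.continuous_conj.measurable.comp
      (hF.comp (measurable_fst.prodMk (measurable_snd.comp measurable_snd))))

theorem integral_norm_mul_norm_le_sqrt_mul_sqrt {E : Type*} [NormedAddCommGroup E]
    {f h : α → E} (hf : MemLp f 2 μ) (hh : MemLp h 2 μ) :
    ∫ a, ‖f a‖ * ‖h a‖ ∂μ ≤ √(∫ a, ‖f a‖ ^ 2 ∂μ) * √(∫ a, ‖h a‖ ^ 2 ∂μ) := by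
  have := integral_mul_norm_le_Lp_mul_Lq Real.HolderConjugate.two_two
    (f := f) (g := h) (by rwa [ENNReal.ofReal_ofNat]) (by rwa [ENNReal.ofReal_ofNat])
  simpa [Real.sqrt_eq_rpow] using this

theorem integral_norm_mul_norm_mul_norm_le [SFinite ν] {E F : Type*} [NormedAddCommGroup E]
    [NormedAddCommGroup F] {v : β → ℝ} (hv : AEStronglyMeasurable v ν)
    (hv0 : ∀ᵐ x ∂ν, v x ≠ 0) {g : β → E} (hg : AEStronglyMeasurable g ν)
    (hgv : Integrable (fun x => v x ^ 2 * ‖g x‖ ^ 2) ν) {M : β × β → F}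
    (hM : AEStronglyMeasurable M (ν.prod ν))
    (hMv : Integrable (fun p => (v p.1 ^ 2)⁻¹ * (v p.2 ^ 2)⁻¹ * ‖M p‖ ^ 2) (ν.prod ν)) :
    ∫ p, ‖g p.1‖ * ‖g p.2‖ * ‖M p‖ ∂(ν.prod ν)
      ≤ √(∫ x, ∫ y, (v x ^ 2)⁻¹ * (v y ^ 2)⁻¹ * ‖M (x, y)‖ ^ 2 ∂ν ∂ν)
          * ∫ x, v x ^ 2 * ‖g x‖ ^ 2 ∂ν := by
  set f : β × β → ℝ := fun p => v p.1 * v p.2 * (‖g p.1‖ * ‖g p.2‖)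
  set h : β × β → ℝ := fun p => (v p.1 * v p.2)⁻¹ * ‖M p‖
  have hvv : AEStronglyMeasurable (fun p : β × β => v p.1 * v p.2) (ν.prod ν) :=
    hv.comp_fst.mul hv.comp_snd
  have hf : MemLp f 2 (ν.prod ν) := by
    refine (memLp_two_iff_integrable_sq (f := f)
      (hvv.mul (hg.comp_fst.norm.mul hg.comp_snd.norm))).mpr ?_
    exact (hgv.mul_prod hgv).congr (.of_forall fun p => by simp only [f]; ring)
  have hh : MemLp h 2 (ν.prod ν) := by
    refine (memLp_two_iff_integrable_sq (f := h)
      (hvv.aemeasurable.inv.aestronglyMeasurable.mul hM.norm)).mpr ?_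
    exact hMv.congr (.of_forall fun p => by simp only [h]; ring)
  have hf_sq : ∫ p, ‖f p‖ ^ 2 ∂(ν.prod ν) = (∫ x, v x ^ 2 * ‖g x‖ ^ 2 ∂ν) ^ 2 := by
    rw [sq, ← integral_prod_mul]
    congr 1 with p
    simp only [f, Real.norm_eq_abs, sq_abs]
    ring
  have hh_sq : ∫ p, ‖h p‖ ^ 2 ∂(ν.prod ν)
      = ∫ x, ∫ y, (v x ^ 2)⁻¹ * (v y ^ 2)⁻¹ * ‖M (x, y)‖ ^ 2 ∂ν ∂ν := by
    rw [← integral_prod _ hMv]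
    congr 1 with p
    simp only [h, Real.norm_eq_abs, sq_abs]
    ring
  have hsplit : ∀ᵐ p ∂(ν.prod ν), ‖g p.1‖ * ‖g p.2‖ * ‖M p‖ = ‖f p‖ * ‖h p‖ := by
    filter_upwards [Measure.quasiMeasurePreserving_fst.ae hv0,
      Measure.quasiMeasurePreserving_snd.ae hv0] with p h1 h2
    have hv12 : ‖v p.1‖ * ‖v p.2‖ ≠ 0 := by positivity
    simp only [f, h, norm_mul, norm_inv, norm_norm]
    field_simp
  calc ∫ p, ‖g p.1‖ * ‖g p.2‖ * ‖M p‖ ∂(ν.prod ν)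
      = ∫ p, ‖f p‖ * ‖h p‖ ∂(ν.prod ν) := integral_congr_ae hsplit
    _ ≤ √(∫ p, ‖f p‖ ^ 2 ∂(ν.prod ν)) * √(∫ p, ‖h p‖ ^ 2 ∂(ν.prod ν)) :=
      integral_norm_mul_norm_le_sqrt_mul_sqrt hf hh
    _ = _ := by
      rw [hf_sq, hh_sq, Real.sqrt_sq (integral_nonneg fun x => by positivity), mul_comm]

theorem integral_mul_norm_integral_sq_eq_re [SFinite μ] [SFinite ν] {w : α → ℝ}
    (hw : Measurable w) (hw0 : ∀ l, 0 ≤ w l) {K : α → β → ℂ}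
    (hK : Measurable (Function.uncurry K)) {g : β → ℂ} (hg : Measurable g)
    (hFub : Integrable (fun q : α × β × β =>
      w q.1 * ‖K q.1 q.2.1 * g q.2.1 * conj (K q.1 q.2.2 * g q.2.2)‖) (μ.prod (ν.prod ν))) :
    ∫ l, w l * ‖∫ l₁, K l l₁ * g l₁ ∂ν‖ ^ 2 ∂μ
      = (∫ p, g p.1 * conj (g p.2) *
          ∫ l, (w l : ℂ) * (K l p.1 * conj (K l p.2)) ∂μ ∂(ν.prod ν)).re := by
  set G : α × β × β → ℂ := fun q =>
    (w q.1 : ℂ) * (K q.1 q.2.1 * g q.2.1 * conj (K q.1 q.2.2 * g q.2.2))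
  have hG : Integrable G (μ.prod (ν.prod ν)) := by
    have hGm : Measurable G := (Complex.measurable_ofReal.comp (hw.comp measurable_fst)).mul
      (measurable_mul_conj_of_uncurry (F := fun l l₁ => K l l₁ * g l₁)
        (hK.mul (hg.comp measurable_snd)))
    refine (integrable_norm_iff hGm.aestronglyMeasurable).mp (hFub.congr (.of_forall fun q => ?_))
    simp [G, abs_of_nonneg (hw0 q.1)]
  have hfiber : ∀ l, (w l : ℂ) * ((∫ l₁, K l l₁ * g l₁ ∂ν) * conj (∫ l₁, K l l₁ * g l₁ ∂ν))
      = ∫ p, G (l, p) ∂(ν.prod ν) := by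
    intro l
    rw [← integral_conj, ← integral_prod_mul, ← integral_const_mul]
  have hpoint : ∀ p : β × β, ∫ l, G (l, p) ∂μ
      = g p.1 * conj (g p.2) * ∫ l, (w l : ℂ) * (K l p.1 * conj (K l p.2)) ∂μ := by
    intro p
    rw [← integral_const_mul]
    congr 1 with l
    simp only [G, map_mul]
    ring
  have hre : ∀ l, w l * ‖∫ l₁, K l l₁ * g l₁ ∂ν‖ ^ 2
      = ((w l : ℂ) * ((∫ l₁, K l l₁ * g l₁ ∂ν) * conj (∫ l₁, K l l₁ * g l₁ ∂ν))).re := by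
    intro l
    rw [Complex.mul_conj, ← Complex.ofReal_mul, Complex.ofReal_re, Complex.normSq_eq_norm_sq]
  simp_rw [hre, hfiber]
  have hswap := integral_integral_swap (f := fun l p => G (l, p)) hG
  have hre_int := integral_re (𝕜 := ℂ) hG.integral_prod_left
  simp only [RCLike.re_to_complex] at hre_int
  rw [hre_int, hswap]
  simp_rw [hpoint]

theorem integral_mul_norm_integral_sq_le [SFinite μ] [SFinite ν] {w : α → ℝ}
    (hw : Measurable w) (hw0 : ∀ l, 0 ≤ w l) {v : β → ℝ} (hv : AEStronglyMeasurable v ν)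
    (hv0 : ∀ᵐ x ∂ν, v x ≠ 0) {K : α → β → ℂ} (hK : Measurable (Function.uncurry K))
    {g : β → ℂ} (hg : Measurable g) (hgv : Integrable (fun x => v x ^ 2 * ‖g x‖ ^ 2) ν)
    (hFub : Integrable (fun q : α × β × β =>
      w q.1 * ‖K q.1 q.2.1 * g q.2.1 * conj (K q.1 q.2.2 * g q.2.2)‖) (μ.prod (ν.prod ν)))
    (hP : Integrable (fun p : β × β => (v p.1 ^ 2)⁻¹ * (v p.2 ^ 2)⁻¹ *
      ‖∫ l, (w l : ℂ) * (K l p.1 * conj (K l p.2)) ∂μ‖ ^ 2) (ν.prod ν)) :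
    ∫ l, w l * ‖∫ l₁, K l l₁ * g l₁ ∂ν‖ ^ 2 ∂μ
      ≤ √(∫ l₁, ∫ l₁', (v l₁ ^ 2)⁻¹ * (v l₁' ^ 2)⁻¹ *
            ‖∫ l, (w l : ℂ) * (K l l₁ * conj (K l l₁')) ∂μ‖ ^ 2 ∂ν ∂ν)
          * ∫ l₁, v l₁ ^ 2 * ‖g l₁‖ ^ 2 ∂ν := by
  set M : β × β → ℂ := fun p => ∫ l, (w l : ℂ) * (K l p.1 * conj (K l p.2)) ∂μ
  have hM : AEStronglyMeasurable M (ν.prod ν) := by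
    have hm : Measurable fun q : α × β × β => (w q.1 : ℂ) * (K q.1 q.2.1 * conj (K q.1 q.2.2)) :=
      (Complex.measurable_ofReal.comp (hw.comp measurable_fst)).mul
        (measurable_mul_conj_of_uncurry hK)
    exact hm.stronglyMeasurable.integral_prod_left'.aestronglyMeasurable
  rw [integral_mul_norm_integral_sq_eq_re hw hw0 hK hg hFub]
  calc (∫ p, g p.1 * conj (g p.2) * M p ∂(ν.prod ν)).re
      ≤ ‖∫ p, g p.1 * conj (g p.2) * M p ∂(ν.prod ν)‖ := Complex.re_le_norm _
    _ ≤ ∫ p, ‖g p.1‖ * ‖g p.2‖ * ‖M p‖ ∂(ν.prod ν) :=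
      (norm_integral_le_integral_norm _).trans_eq (by simp)
    _ ≤ _ := integral_norm_mul_norm_mul_norm_le hv hv0 hg.aestronglyMeasurable hgv hM hP

end

/-- In Fourier variables, with `g = F f`, this is
`‖L_K f‖²_{H^{b̲'}} ≤ √P · ‖f‖²_{H^{b̲}}`. -/
theorem stmt12_general (d : ℕ) (K : (Fin d → ℝ) → (Fin d → ℝ) → ℂ)
    (b b' : Fin d → ℝ)
    (hK : Measurable (Function.uncurry K))
    (g : (Fin d → ℝ) → ℂ) (hgm : Measurable g)
    (hg : Integrable (fun l₁ => jbv b l₁ ^ 2 * ‖g l₁‖ ^ 2))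
    (hFub : Integrable (fun q : (Fin d → ℝ) × (Fin d → ℝ) × (Fin d → ℝ) =>
      jbv b' q.1 ^ 2 *
        ‖K q.1 q.2.1 * g q.2.1 * (starRingEnd ℂ) (K q.1 q.2.2 * g q.2.2)‖))
    (hP : Integrable (fun p : (Fin d → ℝ) × (Fin d → ℝ) =>
      (jbv b p.1 ^ 2)⁻¹ * (jbv b p.2 ^ 2)⁻¹ *
        ‖∫ l, ((jbv b' l ^ 2 : ℝ) : ℂ) * (K l p.1 * (starRingEnd ℂ) (K l p.2))‖ ^ 2)) :
    (∫ l, jbv b' l ^ 2 * ‖∫ l₁, K l l₁ * g l₁‖ ^ 2)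
      ≤ Real.sqrt (∫ l₁, ∫ l₁',
            (jbv b l₁ ^ 2)⁻¹ * (jbv b l₁' ^ 2)⁻¹ *
              ‖∫ l, ((jbv b' l ^ 2 : ℝ) : ℂ) * (K l l₁ * (starRingEnd ℂ) (K l l₁'))‖ ^ 2)
          * ∫ l₁, jbv b l₁ ^ 2 * ‖g l₁‖ ^ 2 := by
  rcases eq_or_ne d 0 with rfl | hd
  · -- on `Fin 0 → ℝ` both brackets vanish identically, so both sides are `0`
    simp [jbv]
  have : NeZero d := ⟨hd⟩
  exact integral_mul_norm_integral_sq_le ((measurable_jbv b').pow_const 2) (fun l => sq_nonneg _)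
    (measurable_jbv b).aestronglyMeasurable (ae_jbv_ne_zero b) hK hgm hg hFub hP

/-- the operator `L_K` defined in Fourier variables by
`(F L_K f)(λ) = ∫ K(λ,λ₁) (F f)(λ₁) dλ₁` satisfies
`‖L_K‖_{H^{b̲} → H^{b̲'}} ≤ P^{1/4}`, i.e. for every (Fourier transform of a) function `g`,
`∫ ⟨λ⟩²_{b̲'} ‖∫ K(λ,λ₁) g(λ₁) dλ₁‖² dλ ≤ √P · ∫ ⟨λ₁⟩²_{b̲} ‖g(λ₁)‖² dλ₁`. -/
theorem stmt12 (d : ℕ) (K : (Fin d → ℝ) → (Fin d → ℝ) → ℂ)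
    (b b' : Fin d → ℝ)
    (hK : Measurable (Function.uncurry K))
    (hK2 : MemLp (Function.uncurry K) 2 volume)
    (g : (Fin d → ℝ) → ℂ) (hgm : Measurable g)
    (hg : Integrable (fun l₁ => jbv b l₁ ^ 2 * ‖g l₁‖ ^ 2))
    (hKg : ∀ l, Integrable (fun l₁ => K l l₁ * g l₁))
    (hL : Integrable (fun l => jbv b' l ^ 2 * ‖∫ l₁, K l l₁ * g l₁‖ ^ 2))
    (hFub : Integrable (fun q : (Fin d → ℝ) × (Fin d → ℝ) × (Fin d → ℝ) =>
      jbv b' q.1 ^ 2 *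
        ‖K q.1 q.2.1 * g q.2.1 * (starRingEnd ℂ) (K q.1 q.2.2 * g q.2.2)‖))
    (hP : Integrable (fun p : (Fin d → ℝ) × (Fin d → ℝ) =>
      (jbv b p.1 ^ 2)⁻¹ * (jbv b p.2 ^ 2)⁻¹ *
        ‖∫ l, ((jbv b' l ^ 2 : ℝ) : ℂ) * (K l p.1 * (starRingEnd ℂ) (K l p.2))‖ ^ 2)) :
    (∫ l, jbv b' l ^ 2 * ‖∫ l₁, K l l₁ * g l₁‖ ^ 2)
      ≤ Real.sqrt (∫ l₁, ∫ l₁',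
            (jbv b l₁ ^ 2)⁻¹ * (jbv b l₁' ^ 2)⁻¹ *
              ‖∫ l, ((jbv b' l ^ 2 : ℝ) : ℂ) * (K l l₁ * (starRingEnd ℂ) (K l l₁'))‖ ^ 2)
          * ∫ l₁, jbv b l₁ ^ 2 * ‖g l₁‖ ^ 2 :=
  stmt12_general d K b b' hK g hgm hg hFub hP
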